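/- arXiv:1002.1887 — 2 statements merged into one kernel-verified Lean document; each statement's English description precedes it below -/
import Mathlib

section
/- For any hierarchical segmentation (H,μ) on a finite connected graph G and any λ ≥ 0, the graph H[λ] induced by the union of the edge-closed unions of regions of hierarchy elements at level ≤ λ is a segmentation of G. -/
open SimpleGraph

variable {V : Type*} [Fintype V] [DecidableEq V]

/-- The subgraph of `G` induced by a set `S` of edges: its edges are the edges of `G`
belonging to `S`, and its vertices are the endpoints of those edges. -/
def edgeInduced (G : SimpleGraph V) (S : Set (Sym2 V)) : G.Subgraph where
  verts := {x | ∃ y, G.Adj x y ∧ s(x, y) ∈ S}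
  Adj x y := G.Adj x y ∧ s(x, y) ∈ S
  adj_sub h := h.1
  edge_vert h := ⟨_, h⟩
  symm := ⟨fun x y h => ⟨h.1.symm, by rw [Sym2.eq_swap]; exact h.2⟩⟩

/-- The edge-closing `φ`: `φ(X)` has the same vertices as `X` and all edges of `G`
with both endpoints in `X`. -/
def phi (G : SimpleGraph V) (X : G.Subgraph) : G.Subgraph where
  verts := X.verts
  Adj x y := G.Adj x y ∧ x ∈ X.verts ∧ y ∈ X.verts
  adj_sub h := h.1
  edge_vert h := h.2.1
  symm := ⟨fun x y h => ⟨h.1.symm, h.2.2, h.2.1⟩⟩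

/-- The connected component of the subgraph `S` containing the vertex `x`. -/
def compOf (G : SimpleGraph V) (S : G.Subgraph) (x : V) : G.Subgraph where
  verts := {y ∈ S.verts | S.spanningCoe.Reachable x y}
  Adj a b := S.Adj a b ∧ S.spanningCoe.Reachable x a
  adj_sub h := S.adj_sub h.1
  edge_vert h := ⟨S.edge_vert h.1, h.2⟩
  symm := ⟨fun a b h => ⟨h.1.symm, h.2.trans (SimpleGraph.Adj.reachable (by exact h.1))⟩⟩

/-- A set `C` of edges of `G` is a cut if every edge of `C` joins two distinct
nonempty connected components of the graph induced by the complementary edges. -/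
def IsCut (G : SimpleGraph V) (C : Set (Sym2 V)) : Prop :=
  ∀ x y, G.Adj x y → s(x, y) ∈ C →
    x ∈ (edgeInduced G (G.edgeSet \ C)).verts ∧
    y ∈ (edgeInduced G (G.edgeSet \ C)).verts ∧
    ¬ (edgeInduced G (G.edgeSet \ C)).spanningCoe.Reachable x y

/-- A subgraph `S` of `G` is a segmentation if the complement of its edge set is a cut. -/
def IsSegmentation (G : SimpleGraph V) (S : G.Subgraph) : Prop :=
  IsCut G (G.edgeSet \ S.edgeSet)

/-- Number of connected components of a subgraph. -/
noncomputable def numComp (G : SimpleGraph V) (S : G.Subgraph) : ℕ :=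
  Nat.card S.coe.ConnectedComponent

/-- Adding the edge `{x, y}` (and its endpoints) to the subgraph `X`. -/
def addEdge (G : SimpleGraph V) (X : G.Subgraph) {x y : V} (h : G.Adj x y) : G.Subgraph where
  verts := X.verts ∪ {x, y}
  Adj a b := X.Adj a b ∨ s(a, b) = s(x, y)
  adj_sub := by
    rintro a b (hab | hab)
    · exact X.adj_sub hab
    · rcases Sym2.eq_iff.mp hab with ⟨rfl, rfl⟩ | ⟨rfl, rfl⟩
      · exact h
      · exact h.symm
  edge_vert := by
    rintro a b (hab | hab)
    · exact Or.inl (X.edge_vert hab)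
    · rcases Sym2.eq_iff.mp hab with ⟨rfl, rfl⟩ | ⟨rfl, rfl⟩
      · exact Or.inr (by simp)
      · exact Or.inr (by simp)
  symm := ⟨by
    rintro a b (hab | hab)
    · exact Or.inl hab.symm
    · right; rwa [Sym2.eq_swap]⟩

/-- The edge `{x, y}` is W-simple for `X` if adding it does not change the number
of connected components. -/
def WSimple (G : SimpleGraph V) (X : G.Subgraph) {x y : V} (h : G.Adj x y) : Prop :=
  numComp G (addEdge G X h) = numComp G X

/-- `X` is a binary watershed of `G` if no edge outside of `X` is W-simple for `X`. -/
def BinaryWatershed (G : SimpleGraph V) (X : G.Subgraph) : Prop :=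
  ∀ x y (h : G.Adj x y), s(x, y) ∉ X.edgeSet → ¬ WSimple G X h

/-- The cross-section `F[l]`: the subgraph induced by the edges of weight at most `l`. -/
def levelSub (G : SimpleGraph V) (F : Sym2 V → NNReal) (l : NNReal) : G.Subgraph :=
  edgeInduced G {e | F e ≤ l}

/-- The connection value between `x` and `y`: the least level `l` such that `x` and `y`
lie in the same connected component of `F[l]`. -/
noncomputable def connVal (G : SimpleGraph V) (F : Sym2 V → NNReal) (x y : V) : NNReal :=
  sInf {l | (levelSub G F l).spanningCoe.Reachable x y}

/-- The edge `{x, y}` is W-destructible for `F` with lowest value `l0`. -/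
def WDestructible (G : SimpleGraph V) (F : Sym2 V → NNReal) {x y : V} (h : G.Adj x y)
    (l0 : NNReal) : Prop :=
  (∀ l1, l0 < l1 → l1 ≤ F s(x, y) → WSimple G (levelSub G F l1) h) ∧
    ¬ WSimple G (levelSub G F l0) h

/-- `F` is a topological watershed if it has no W-destructible edge. -/
def TopologicalWatershed (G : SimpleGraph V) (F : Sym2 V → NNReal) : Prop :=
  ∀ x y (h : G.Adj x y) (l0 : NNReal), ¬ WDestructible G F h l0

/-- A regional minimum of `F`: a connected component `X` of some cross-section `F[l]`
containing no edge of weight `< l`. -/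
def IsMinimum (G : SimpleGraph V) (F : Sym2 V → NNReal) (X : G.Subgraph) : Prop :=
  ∃ (l : NNReal) (x : V), x ∈ (levelSub G F l).verts ∧ X = compOf G (levelSub G F l) x ∧
    ∀ l1 < l, ∀ e ∈ X.edgeSet, ¬ F e ≤ l1

/-- The graph `M(F)`, union of all the regional minima of `F`. -/
def minimaGraph (G : SimpleGraph V) (F : Sym2 V → NNReal) : G.Subgraph where
  verts := {x | ∃ X, IsMinimum G F X ∧ x ∈ X.verts}
  Adj a b := ∃ X, IsMinimum G F X ∧ X.Adj a b
  adj_sub := by rintro a b ⟨X, _, hab⟩; exact X.adj_sub hab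
  edge_vert := by rintro a b ⟨X, hX, hab⟩; exact ⟨X, hX, X.edge_vert hab⟩
  symm := ⟨by rintro a b ⟨X, hX, hab⟩; exact ⟨X, hX, hab.symm⟩⟩

/-- Connection value between two subgraphs: `F(X,Y) = min {F(x,y) : x ∈ X, y ∈ Y}`. -/
noncomputable def connValSub (G : SimpleGraph V) (F : Sym2 V → NNReal)
    (X Y : G.Subgraph) : NNReal :=
  sInf {l | ∃ x ∈ X.verts, ∃ y ∈ Y.verts, connVal G F x y = l}

/-- An ultrametric watershed: a topological watershed which is null on all its minima. -/
def UltrametricWatershed (G : SimpleGraph V) (F : Sym2 V → NNReal) : Prop :=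
  TopologicalWatershed G F ∧ ∀ X, IsMinimum G F X → ∀ e ∈ X.edgeSet, F e = 0

/-- The regions of a segmentation `S`: its connected components. -/
def Regions (G : SimpleGraph V) (S : G.Subgraph) : Set G.Subgraph :=
  {X | ∃ x ∈ S.verts, X = compOf G S x}

/-- A hierarchical segmentation on `G`: an indexed hierarchy `(H, μ)` on the set of
regions of a segmentation `S` of `G` such that the edge-closing of the union of the
regions of each member of the hierarchy is connected. -/
structure HierSeg {V : Type*} [Fintype V] [DecidableEq V] (G : SimpleGraph V) where
  S : G.Subgraph
  seg : IsSegmentation G S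
  H : Set (Set G.Subgraph)
  hsub : ∀ h ∈ H, h ⊆ Regions G S
  htop : Regions G S ∈ H
  hsing : ∀ X ∈ Regions G S, {X} ∈ H
  hnest : ∀ h ∈ H, ∀ h' ∈ H, (h ∩ h').Nonempty → h ⊆ h' ∨ h' ⊆ h
  mu : Set G.Subgraph → NNReal
  mu_zero : ∀ h ∈ H, (mu h = 0 ↔ ∃ X, h = {X})
  mu_mono : ∀ h ∈ H, ∀ h' ∈ H, h ⊂ h' → mu h < mu h'
  mu_out : ∀ h ∉ H, mu h = 0
  hconn : ∀ h ∈ H, (phi G (sSup h)).Connected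

/-- `H[l]`: the graph induced by the (edge-closed unions of regions of the) members
of the hierarchy at level at most `l`. -/
def HLevel (G : SimpleGraph V) (HS : HierSeg G) (l : NNReal) : G.Subgraph :=
  sSup {K | ∃ h ∈ HS.H, HS.mu h ≤ l ∧ K = phi G (sSup h)}

/-- The saliency map of a hierarchical segmentation. -/
noncomputable def saliencyMap (G : SimpleGraph V) (HS : HierSeg G) : Sym2 V → NNReal :=
  fun e => sInf {l | e ∈ (HLevel G HS l).edgeSet}

/-- The ultrametric opening `Ψ`. -/
noncomputable def psi (G : SimpleGraph V) (F : Sym2 V → NNReal) : Sym2 V → NNReal :=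
  Sym2.lift ⟨fun x y => connVal G F x y, fun x y => by
    have hs : {l | (levelSub G F l).spanningCoe.Reachable x y} =
        {l | (levelSub G F l).spanningCoe.Reachable y x} := by
      ext l
      exact ⟨fun hr => hr.symm, fun hr => hr.symm⟩
    show sInf _ = sInf _
    rw [hs]⟩

/-- Altitude of the lowest component of `F` containing `x`. -/
noncomputable def vertAlt (G : SimpleGraph V) (F : Sym2 V → NNReal) (x : V) : NNReal :=
  sInf {l | x ∈ (levelSub G F l).verts}

/-- `x` and `y` are `l`-separated for `F`. -/
def SeparatedAt (G : SimpleGraph V) (F : Sym2 V → NNReal) (x y : V) (l : NNReal) : Prop :=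
  connVal G F x y = l ∧ max (vertAlt G F x) (vertAlt G F y) < l

/-- `F'` is a separation of `F`. -/
def IsSeparation (G : SimpleGraph V) (F F' : Sym2 V → NNReal) : Prop :=
  ∀ x y l, SeparatedAt G F x y l → SeparatedAt G F' x y l

/-- `C` is a connected component of the cross-section `F[l]`. -/
def IsCompAt (G : SimpleGraph V) (F : Sym2 V → NNReal) (l : NNReal) (C : G.Subgraph) : Prop :=
  ∃ x ∈ (levelSub G F l).verts, C = compOf G (levelSub G F l) x

/-- `h(C)`: the smallest level at which `C` is a component of `F`. -/
noncomputable def hVal (G : SimpleGraph V) (F : Sym2 V → NNReal) (C : G.Subgraph) : NNReal :=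
  sInf {l | IsCompAt G F l C}


/-!
The regions of `S` are singletons of the hierarchy, at level `0`, so `H[λ]` contains every
edge of `S`; since `S` is a segmentation, the cut condition for `H[λ]` then reduces to showing
that an edge of `G` whose endpoints are connected in `H[λ]` is an edge of `H[λ]`. A path in
`H[λ]` runs through edge-closed sets `φ(∪h)` with `μ(h) ≤ λ`. Two such sets sharing a vertex
share a region, so they are nested: the whole path lies in the largest one, which, being
edge-closed, contains the edge.
-/

section General

omit [Fintype V] [DecidableEq V]

variable {G : SimpleGraph V}

theorem edgeInduced_sdiff_sdiff_adj {K : G.Subgraph} {x y : V} :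
    (edgeInduced G (G.edgeSet \ (G.edgeSet \ K.edgeSet))).Adj x y ↔ K.Adj x y := by
  rw [sdiff_sdiff_right_self]
  exact ⟨fun h => h.2.2, fun h => ⟨K.adj_sub h, K.adj_sub h, h⟩⟩

theorem spanningCoe_edgeInduced_sdiff_sdiff (K : G.Subgraph) :
    (edgeInduced G (G.edgeSet \ (G.edgeSet \ K.edgeSet))).spanningCoe = K.spanningCoe := by
  ext x y
  exact edgeInduced_sdiff_sdiff_adj

theorem IsSegmentation.of_adj_le_of_reachable {S K : G.Subgraph} (hS : IsSegmentation G S)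
    (hSK : ∀ ⦃a b⦄, S.Adj a b → K.Adj a b)
    (hK : ∀ ⦃x y⦄, G.Adj x y → K.spanningCoe.Reachable x y → K.Adj x y) :
    IsSegmentation G K := by
  rintro x y hxy ⟨hxyG, hxyK⟩
  have hnK : ¬ K.Adj x y := fun h => hxyK h
  obtain ⟨hx, hy, -⟩ := hS x y hxy ⟨hxyG, fun h => hnK (hSK h)⟩
  have hverts : ∀ w, w ∈ (edgeInduced G (G.edgeSet \ (G.edgeSet \ S.edgeSet))).verts →
      w ∈ (edgeInduced G (G.edgeSet \ (G.edgeSet \ K.edgeSet))).verts := fun _ ⟨z, hz⟩ =>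
    ⟨z, edgeInduced_sdiff_sdiff_adj.2 (hSK (edgeInduced_sdiff_sdiff_adj.1 hz))⟩
  refine ⟨hverts x hx, hverts y hy, fun hr => hnK (hK hxy ?_)⟩
  rwa [spanningCoe_edgeInduced_sdiff_sdiff] at hr

theorem phi_mono {X Y : G.Subgraph} (h : X ≤ Y) : phi G X ≤ phi G Y :=
  ⟨h.1, fun _ _ hab => ⟨hab.1, h.1 hab.2.1, h.1 hab.2.2⟩⟩

theorem compOf_eq_of_reachable {S : G.Subgraph} {x x' : V} (h : S.spanningCoe.Reachable x x') :
    compOf G S x = compOf G S x' := by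
  have key : ∀ z, S.spanningCoe.Reachable x z ↔ S.spanningCoe.Reachable x' z :=
    fun _ => ⟨h.symm.trans, h.trans⟩
  ext <;> simp only [compOf, Set.mem_ofPred_eq, key]

theorem Regions.eq_of_mem_verts {S X X' : G.Subgraph} (hX : X ∈ Regions G S)
    (hX' : X' ∈ Regions G S) {v : V} (hv : v ∈ X.verts) (hv' : v ∈ X'.verts) : X = X' := by
  obtain ⟨x, -, rfl⟩ := hX
  obtain ⟨x', -, rfl⟩ := hX'
  exact compOf_eq_of_reachable (hv.2.trans hv'.2.symm)

theorem eq_or_exists_mem_verts_of_reachable_sSup {𝒦 : Set G.Subgraph}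
    (hnest : ∀ K ∈ 𝒦, ∀ K' ∈ 𝒦, ∀ v ∈ K.verts, v ∈ K'.verts → K ≤ K' ∨ K' ≤ K)
    {a b : V} (hab : (sSup 𝒦).spanningCoe.Reachable a b) :
    a = b ∨ ∃ K ∈ 𝒦, a ∈ K.verts ∧ b ∈ K.verts := by
  obtain ⟨p⟩ := hab
  induction p with
  | nil => exact Or.inl rfl
  | cons hac _ ih =>
    obtain ⟨K, hK, hKac⟩ := Subgraph.sSup_adj.mp hac
    right
    rcases ih with rfl | ⟨K', hK', hc, hb⟩
    · exact ⟨K, hK, K.edge_vert hKac, K.edge_vert hKac.symm⟩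
    · rcases hnest K hK K' hK' _ (K.edge_vert hKac.symm) hc with hle | hle
      · exact ⟨K', hK', hle.1 (K.edge_vert hKac), hb⟩
      · exact ⟨K, hK, K.edge_vert hKac, hle.1 hb⟩

theorem sSup_adj_of_reachable {𝒦 : Set G.Subgraph}
    (hnest : ∀ K ∈ 𝒦, ∀ K' ∈ 𝒦, ∀ v ∈ K.verts, v ∈ K'.verts → K ≤ K' ∨ K' ≤ K)
    (hclosed : ∀ K ∈ 𝒦, ∀ ⦃x y⦄, G.Adj x y → x ∈ K.verts → y ∈ K.verts → K.Adj x y)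
    {x y : V} (hxy : G.Adj x y) (hr : (sSup 𝒦).spanningCoe.Reachable x y) :
    (sSup 𝒦).Adj x y := by
  rcases eq_or_exists_mem_verts_of_reachable_sSup hnest hr with rfl | ⟨K, hK, hx, hy⟩
  · exact absurd hxy (G.loopless.irrefl x)
  · exact Subgraph.sSup_adj.mpr ⟨K, hK, hclosed K hK hxy hx hy⟩

end General

namespace HierSeg

variable {G : SimpleGraph V} (HS : HierSeg G)

theorem subset_or_subset_of_mem_verts {h h' : Set G.Subgraph} (hh : h ∈ HS.H) (hh' : h' ∈ HS.H)
    {v : V} (hv : v ∈ (sSup h).verts) (hv' : v ∈ (sSup h').verts) : h ⊆ h' ∨ h' ⊆ h := by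
  rw [Subgraph.verts_sSup, Set.mem_iUnion₂] at hv hv'
  obtain ⟨X, hX, hvX⟩ := hv
  obtain ⟨X', hX', hvX'⟩ := hv'
  obtain rfl := Regions.eq_of_mem_verts (HS.hsub h hh hX) (HS.hsub h' hh' hX') hvX hvX'
  exact HS.hnest h hh h' hh' ⟨X, hX, hX'⟩

theorem adj_HLevel_of_adj (l : NNReal) {a b : V} (hab : HS.S.Adj a b) :
    (HLevel G HS l).Adj a b := by
  have ha : a ∈ HS.S.verts := HS.S.edge_vert hab
  have hreg : compOf G HS.S a ∈ Regions G HS.S := ⟨a, ha, rfl⟩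
  have hsing := HS.hsing _ hreg
  have hmu : HS.mu {compOf G HS.S a} = 0 := (HS.mu_zero _ hsing).mpr ⟨_, rfl⟩
  refine Subgraph.sSup_adj.mpr ⟨_, ⟨_, hsing, hmu.le.trans zero_le, rfl⟩, ?_⟩
  rw [sSup_singleton]
  exact ⟨HS.S.adj_sub hab, ⟨ha, Reachable.refl a⟩,
    ⟨HS.S.edge_vert hab.symm, Adj.reachable (show HS.S.spanningCoe.Adj a b from hab)⟩⟩

theorem adj_HLevel_of_reachable (l : NNReal) {x y : V} (hxy : G.Adj x y)
    (hr : (HLevel G HS l).spanningCoe.Reachable x y) : (HLevel G HS l).Adj x y := by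
  refine sSup_adj_of_reachable ?_ ?_ hxy hr
  · rintro _ ⟨h, hh, -, rfl⟩ _ ⟨h', hh', -, rfl⟩ v hv hv'
    rcases HS.subset_or_subset_of_mem_verts hh hh' hv hv' with hs | hs
    · exact Or.inl (phi_mono (sSup_le_sSup hs))
    · exact Or.inr (phi_mono (sSup_le_sSup hs))
  · rintro _ ⟨h, -, -, rfl⟩ a b hab ha hb
    exact ⟨hab, ha, hb⟩

end HierSeg

theorem stmt8_general (G : SimpleGraph V) (HS : HierSeg G) (l : NNReal) :
    IsSegmentation G (HLevel G HS l) :=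
  HS.seg.of_adj_le_of_reachable (fun _ _ => HS.adj_HLevel_of_adj l)
    (fun _ _ => HS.adj_HLevel_of_reachable l)

theorem stmt8 (G : SimpleGraph V) (hG : G.Connected) (HS : HierSeg G) (l : NNReal) :
    IsSegmentation G (HLevel G HS l) :=
  stmt8_general G HS l
end

section
/- For an edge-weight function F on a finite connected graph, F can be reconstructed from its component tree: for every edge v, F(v) = min{λ : [λ,C] ∈ C*(F), v ∈ E(C)}, where C*(F) consists of the pairs [h(C), C] for C a component of some cross-section F[λ] and h(C) the minimal such λ. -/
open SimpleGraph

variable {V : Type*} [Fintype V] [DecidableEq V]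

/-!
Every edge of a component of `F[λ]` has weight at most `λ`, so every candidate level for an
edge `v` is at least `F v`. Conversely, the component of `F[F v]` through `v` contains `v`,
hence its height is exactly `F v`, and it realises the minimum.
-/

section

omit [Fintype V] [DecidableEq V]

theorem compOf_le (G : SimpleGraph V) (S : G.Subgraph) (x : V) : compOf G S x ≤ S :=
  ⟨fun _ hy => hy.1, fun _ _ hab => hab.1⟩

theorem mem_edgeSet_levelSub {G : SimpleGraph V} {F : Sym2 V → NNReal} {l : NNReal} {e : Sym2 V} :
    e ∈ (levelSub G F l).edgeSet ↔ e ∈ G.edgeSet ∧ F e ≤ l := by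
  induction e using Sym2.inductionOn with
  | hf a b => exact Iff.rfl

theorem IsCompAt.le_of_mem_edgeSet {G : SimpleGraph V} {F : Sym2 V → NNReal} {l : NNReal}
    {C : G.Subgraph} (hC : IsCompAt G F l C) {e : Sym2 V} (he : e ∈ C.edgeSet) : F e ≤ l := by
  obtain ⟨x, -, rfl⟩ := hC
  exact (mem_edgeSet_levelSub.mp (Subgraph.edgeSet_mono (compOf_le G _ x) he)).2

theorem IsCompAt.le_hVal_of_mem_edgeSet {G : SimpleGraph V} {F : Sym2 V → NNReal} {l : NNReal}
    {C : G.Subgraph} (hC : IsCompAt G F l C) {e : Sym2 V} (he : e ∈ C.edgeSet) :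
    F e ≤ hVal G F C :=
  le_csInf ⟨l, hC⟩ fun _ hl => hl.le_of_mem_edgeSet he

theorem IsCompAt.hVal_le {G : SimpleGraph V} {F : Sym2 V → NNReal} {l : NNReal}
    {C : G.Subgraph} (hC : IsCompAt G F l C) : hVal G F C ≤ l :=
  csInf_le (OrderBot.bddBelow _) hC

theorem isCompAt_compOf_levelSub {G : SimpleGraph V} (F : Sym2 V → NNReal) {x y : V}
    (h : G.Adj x y) : IsCompAt G F (F s(x, y)) (compOf G (levelSub G F (F s(x, y))) x) :=
  ⟨x, ⟨y, h, le_refl (F s(x, y))⟩, rfl⟩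

theorem mem_edgeSet_compOf_levelSub {G : SimpleGraph V} (F : Sym2 V → NNReal) {x y : V}
    (h : G.Adj x y) : s(x, y) ∈ (compOf G (levelSub G F (F s(x, y))) x).edgeSet :=
  ⟨⟨h, le_refl (F s(x, y))⟩, Reachable.refl x⟩

end

theorem stmt15_general (G : SimpleGraph V) (F : Sym2 V → NNReal) :
    ∀ v ∈ G.edgeSet,
      F v = sInf {l | ∃ C : G.Subgraph, IsCompAt G F l C ∧ hVal G F C = l ∧
        v ∈ C.edgeSet} := by
  refine Sym2.ind fun x y hxy => ?_
  have hC := isCompAt_compOf_levelSub F hxy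
  have hmem := mem_edgeSet_compOf_levelSub F hxy
  have hh : hVal G F (compOf G (levelSub G F (F s(x, y))) x) = F s(x, y) :=
    le_antisymm hC.hVal_le (hC.le_hVal_of_mem_edgeSet hmem)
  symm
  refine IsLeast.csInf_eq ⟨⟨_, hC, hh, hmem⟩, ?_⟩
  rintro l ⟨C, hCl, -, hvC⟩
  exact hCl.le_of_mem_edgeSet hvC

theorem stmt15 (G : SimpleGraph V) (hG : G.Connected) (F : Sym2 V → NNReal) :
    ∀ v ∈ G.edgeSet,
      F v = sInf {l | ∃ C : G.Subgraph, IsCompAt G F l C ∧ hVal G F C = l ∧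
        v ∈ C.edgeSet} :=
  stmt15_general G F
end
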